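/- arXiv:2209.06838 — 11 statements merged into one kernel-verified Lean document; each statement's English description precedes it below -/
import Mathlib

section
/- Let ℓ ≥ 1 and let f(r) = Σ_{d=ℓ+1}^{2ℓ} α_d r^d be a polynomial with real coefficients satisfying f(r) - f(1-r) = 2r - 1 for all real r. Then the coefficients are uniquely determined and given by α_d = 2(-1)^{d-ℓ-1} · C(2ℓ-1, ℓ-1) · C(ℓ, d-ℓ-1) · (2ℓ-d+1)/((d-1)d). -/
/-!
Let `P = ∑ α_d X^d`. The functional equation says `P - P(1 - X)` is affine, so `P''` is invariant
under `X ↦ 1 - X`. Since `P` has no monomials below degree `ℓ + 1`, `P''` is divisible by `X^(ℓ-1)`,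
hence by symmetry also by `(1 - X)^(ℓ-1)`, and comparing degrees gives
`P'' = c X^(ℓ-1) (1 - X)^(ℓ-1)`. This fixes every `α_d` up to the constant `c`. Differentiating the
functional equation once gives `P'(0) + P'(1) = 2` with `P'(0) = 0`, and `P'(1) = ∑ d α_d` is `c`
times the beta integral `B(ℓ, ℓ) = ((ℓ-1)!)² / (2ℓ-1)!`, written as an alternating binomial sum.
-/

open Finset Polynomial Nat

section BinomialSum

variable {K : Type*} [Field K] [CharZero K]

-- The beta integral `∫₀¹ x^m (1 - x)^n dx = n! m! / (m + n + 1)!`, expanded termwise.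
theorem sum_range_choose_mul_neg_one_pow_div (n m : ℕ) :
    ∑ j ∈ range (n + 1), (n.choose j : K) * ((-1) ^ j / (m + 1 + j)) =
      n ! * m ! / (m + n + 1)! := by
  induction n generalizing m with
  | zero =>
    have : (m ! : K) ≠ 0 := Nat.cast_ne_zero.2 m.factorial_ne_zero
    simp [Nat.factorial_succ]
    field_simp
  | succ n ih =>
    have shift : ∑ j ∈ range (n + 1), (n.choose j : K) * ((-1) ^ (j + 1) / (m + 1 + ↑(j + 1))) =
        -∑ j ∈ range (n + 1), (n.choose j : K) * ((-1) ^ j / ((m + 1 : ℕ) + 1 + j)) := by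
      rw [← sum_neg_distrib]
      refine sum_congr rfl fun j _ => ?_
      push_cast
      ring
    rw [sum_choose_succ_mul (fun i _ => (-1 : K) ^ i / (m + 1 + i)), shift, ih, ih,
      ← sub_eq_add_neg, show m + 1 + n + 1 = m + n + 1 + 1 by omega,
      show m + (n + 1) + 1 = m + n + 1 + 1 by omega]
    have h1 : ((m + n + 1)! : K) ≠ 0 := Nat.cast_ne_zero.2 (factorial_ne_zero _)
    have h2 : ((m + n + 1 : ℕ) : K) + 1 ≠ 0 := Nat.cast_add_one_ne_zero _
    rw [Nat.factorial_succ (m + n + 1), Nat.factorial_succ n, Nat.factorial_succ m]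
    push_cast at h2 ⊢
    field_simp
    ring

theorem sum_range_choose_mul_neg_one_pow_div_self (n : ℕ) :
    ∑ j ∈ range (n + 1), (n.choose j : K) * ((-1) ^ j / (n + 1 + j)) =
      ((n + 1) * ((2 * n + 1).choose n : K))⁻¹ := by
  rw [sum_range_choose_mul_neg_one_pow_div, show n + n + 1 = 2 * n + 1 by omega,
    ← choose_mul_factorial_mul_factorial (show n ≤ 2 * n + 1 by omega),
    show 2 * n + 1 - n = n + 1 by omega, factorial_succ]
  have : (n ! : K) ≠ 0 := Nat.cast_ne_zero.2 n.factorial_ne_zero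
  push_cast
  field_simp

theorem eq_two_mul_succ_mul_choose_of_sum_eq_two {n : ℕ} {a : ℕ → K} {c : K}
    (ha : ∀ j, a j * ((n + 2 + j) * (n + 1 + j)) = c * ((-1) ^ j * n.choose j))
    (hsum : ∑ j ∈ range (n + 1), a j * (n + 2 + j) = 2) :
    c = 2 * (n + 1) * (2 * n + 1).choose n := by
  have hterm : ∀ j ∈ range (n + 1),
      a j * (n + 2 + j) = c * (n.choose j * ((-1) ^ j / (n + 1 + j))) := by
    intro j _
    have : (n + 1 + j : K) ≠ 0 := by norm_cast; omega
    field_simp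
    linear_combination ha j
  rw [sum_congr rfl hterm, ← mul_sum, sum_range_choose_mul_neg_one_pow_div_self] at hsum
  have : (n + 1 : K) ≠ 0 := n.cast_add_one_ne_zero
  have : ((2 * n + 1).choose n : K) ≠ 0 := Nat.cast_ne_zero.2 (Nat.choose_pos (by omega)).ne'
  field_simp at hsum
  linear_combination hsum

end BinomialSum

theorem coeff_sum_C_mul_X_pow {R : Type*} [Semiring R] (s : Finset ℕ) (a : ℕ → R) (k : ℕ) :
    (∑ d ∈ s, C (a d) * X ^ d).coeff k = if k ∈ s then a k else 0 := by
  simp [finsetSum_coeff]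

theorem eval_one_derivative_eq_sum_range {R : Type*} [CommSemiring R] {P : R[X]} {n : ℕ}
    (hlow : X ^ (n + 2) ∣ P) (hdeg : P.natDegree ≤ 2 * n + 2) :
    (derivative P).eval 1 = ∑ j ∈ range (n + 1), P.coeff (n + 2 + j) * (n + 2 + j) := by
  have hlt : (derivative P).natDegree < (n + 1) + (n + 1) :=
    (natDegree_derivative_le P).trans_lt (by omega)
  rw [eval_eq_sum_range' hlt, sum_range_add, sum_eq_zero, zero_add]
  · refine sum_congr rfl fun j _ => ?_
    rw [coeff_derivative, one_pow, mul_one, show n + 1 + j + 1 = n + 2 + j by omega]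
    push_cast
    ring
  · intro i hi
    rw [coeff_derivative, X_pow_dvd_iff.1 hlow (i + 1) (by simp at hi; omega), zero_mul, zero_mul]

section OneSubX

variable {R : Type*} [CommRing R]

theorem coeff_one_sub_X_pow (n k : ℕ) :
    ((1 - X : R[X]) ^ n).coeff k = (-1) ^ k * n.choose k := by
  have h : (1 - X : R[X]) = C (-1) * X + 1 := by simp [sub_eq_neg_add]
  rw [h, add_pow, finsetSum_coeff]
  simp only [one_pow, mul_one, mul_pow, ← C_pow, coeff_mul_natCast, coeff_C_mul_X_pow, ite_mul,
    zero_mul, sum_ite_eq, mem_range]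
  split_ifs with hk
  · rfl
  · rw [Nat.choose_eq_zero_of_lt (by omega), Nat.cast_zero, mul_zero]

theorem iterate_derivative_two_comp_one_sub_X_eq_self {P : R[X]}
    (h : (P - P.comp (1 - X)).natDegree ≤ 1) :
    (derivative^[2] P).comp (1 - X) = derivative^[2] P := by
  have h2 := iterate_derivative_eq_zero (x := 2) (h.trans_lt one_lt_two)
  rw [iterate_derivative_sub, iterate_derivative_comp_one_sub_X, sub_eq_zero] at h2
  simpa using h2.symm

theorem eval_one_derivative_of_sub_comp_one_sub_X {P : R[X]} {a b : R}
    (h : P - P.comp (1 - X) = C a * X + C b) (h1 : P.coeff 1 = 0) :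
    (derivative P).eval 1 = a := by
  have h' := congrArg (fun p => (derivative p).eval 1) h
  simpa [derivative_comp_one_sub_X, ← coeff_zero_eq_eval_zero, coeff_derivative, h1] using h'

variable [Nontrivial R]

theorem exists_eq_C_mul_X_pow_mul_one_sub_X_pow {Q : R[X]} {n : ℕ}
    (hsymm : Q.comp (1 - X) = Q) (hdvd : X ^ n ∣ Q) (hdeg : Q.natDegree ≤ 2 * n) :
    ∃ c, Q = C c * (X ^ n * (1 - X) ^ n) := by
  have hflip : (1 - X : R[X]) ^ n ∣ Q := by
    have h := map_dvd (compRingHom (1 - X)) hdvd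
    rwa [coe_compRingHom_apply, coe_compRingHom_apply, hsymm, X_pow_comp] at h
  have hmonic : (X - 1 : R[X]).Monic := by simpa only [map_one] using monic_X_sub_C (1 : R)
  have hD : (X ^ n * (X - 1) ^ n : R[X]).Monic := (monic_X.pow n).mul (hmonic.pow n)
  have hcop : IsCoprime (X ^ n : R[X]) ((X - 1) ^ n) := IsCoprime.pow ⟨1, -1, by ring⟩
  have hdvd' : X ^ n * (X - 1) ^ n ∣ Q :=
    hcop.mul_dvd hdvd ((pow_dvd_pow_of_dvd ⟨-1, by ring⟩ n).trans hflip)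
  have hdegD : (X ^ n * (X - 1) ^ n : R[X]).natDegree = 2 * n := by
    rw [(monic_X.pow n).natDegree_mul (hmonic.pow n), natDegree_X_pow, hmonic.natDegree_pow,
      ← C_1, natDegree_X_sub_C]
    ring
  refine ⟨(-1) ^ n * Q.leadingCoeff, ?_⟩
  conv_lhs => rw [eq_mul_leadingCoeff_of_monic_of_dvd_of_natDegree_le hD hdvd' (hdegD ▸ hdeg)]
  rw [show (X - 1 : R[X]) = C (-1) * (1 - X) by simp, mul_pow, ← C_pow]
  simp only [map_mul]
  ring

theorem exists_coeff_mul_eq_of_natDegree_sub_comp_one_sub_X_le {P : R[X]} {n : ℕ}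
    (hlow : X ^ (n + 2) ∣ P) (hdeg : P.natDegree ≤ 2 * n + 2)
    (hsymm : (P - P.comp (1 - X)).natDegree ≤ 1) :
    ∃ c : R, ∀ j, P.coeff (n + 2 + j) * ((n + 2 + j) * (n + 1 + j)) =
      c * ((-1) ^ j * n.choose j) := by
  have hdvd : X ^ n ∣ derivative^[2] P := X_pow_dvd_iff.2 fun k hk => by
    rw [coeff_iterate_derivative, X_pow_dvd_iff.1 hlow (k + 2) (by omega), smul_zero]
  obtain ⟨c, hc⟩ := exists_eq_C_mul_X_pow_mul_one_sub_X_pow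
    (iterate_derivative_two_comp_one_sub_X_eq_self hsymm) hdvd
    ((natDegree_iterate_derivative P 2).trans (by omega))
  refine ⟨c, fun j => ?_⟩
  have h := congrArg (coeff · (j + n)) hc
  simp only [coeff_iterate_derivative, coeff_C_mul, coeff_X_pow_mul, coeff_one_sub_X_pow,
    nsmul_eq_mul] at h
  rw [← h, show j + n + 2 = n + 2 + j by omega]
  simp [Nat.descFactorial]
  ring

end OneSubX

theorem coeff_eq_of_sub_comp_one_sub_X_eq {K : Type*} [Field K] [CharZero K] {P : K[X]} {n : ℕ}
    (hlow : X ^ (n + 2) ∣ P) (hdeg : P.natDegree ≤ 2 * n + 2)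
    (h : P - P.comp (1 - X) = C 2 * X + C (-1)) {j : ℕ} (hj : j ≤ n + 1) :
    P.coeff (n + 2 + j) = 2 * (-1) ^ j * (2 * n + 1).choose n * (n + 1).choose j * (n + 1 - j) /
      ((n + 1 + j) * (n + 2 + j)) := by
  obtain ⟨c, hc⟩ := exists_coeff_mul_eq_of_natDegree_sub_comp_one_sub_X_le hlow hdeg
    (h ▸ by compute_degree)
  have hsum := (eval_one_derivative_eq_sum_range hlow hdeg).symm.trans
    (eval_one_derivative_of_sub_comp_one_sub_X h (X_pow_dvd_iff.1 hlow 1 (by omega)))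
  have hcj := hc j
  rw [eq_two_mul_succ_mul_choose_of_sum_eq_two hc hsum] at hcj
  have hpascal := congrArg (Nat.cast (R := K)) (choose_mul_succ_eq n j)
  push_cast [Nat.cast_sub hj] at hpascal
  have : (n + 1 + j : K) ≠ 0 := by norm_cast; omega
  have : (n + 2 + j : K) ≠ 0 := by norm_cast; omega
  field_simp
  linear_combination hcj + 2 * ((2 * n + 1).choose n : K) * (-1) ^ j * hpascal

theorem stmt0 (ℓ : ℕ) (hℓ : 1 ≤ ℓ) (α : ℕ → ℝ)
    (hf : ∀ r : ℝ,
      (∑ d ∈ Finset.Icc (ℓ + 1) (2 * ℓ), α d * r ^ d) -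
        (∑ d ∈ Finset.Icc (ℓ + 1) (2 * ℓ), α d * (1 - r) ^ d) = 2 * r - 1) :
    ∀ d ∈ Finset.Icc (ℓ + 1) (2 * ℓ),
      α d = 2 * (-1 : ℝ) ^ (d - ℓ - 1) * (Nat.choose (2 * ℓ - 1) (ℓ - 1) : ℝ) *
        (Nat.choose ℓ (d - ℓ - 1) : ℝ) * (2 * ℓ - d + 1) / ((d - 1) * d) := by
  obtain ⟨n, rfl⟩ : ∃ n, ℓ = n + 1 := ⟨ℓ - 1, by omega⟩
  rw [show 2 * (n + 1) = 2 * n + 2 by ring] at hf ⊢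
  set P : ℝ[X] := ∑ d ∈ Icc (n + 2) (2 * n + 2), C (α d) * X ^ d
  have hcoeff : ∀ k, P.coeff k = if k ∈ Icc (n + 2) (2 * n + 2) then α k else 0 :=
    coeff_sum_C_mul_X_pow _ α
  have hP : P - P.comp (1 - X) = C 2 * X + C (-1) := Polynomial.funext fun r => by
    simpa [P, eval_finsetSum, ← sub_eq_add_neg] using hf r
  have hlow : X ^ (n + 2) ∣ P := X_pow_dvd_iff.2 fun k hk => by simp [hcoeff]; omega
  have hdeg : P.natDegree ≤ 2 * n + 2 :=
    natDegree_le_iff_coeff_eq_zero.2 fun k hk => by simp [hcoeff]; omega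
  intro d hd
  obtain ⟨j, rfl⟩ : ∃ j, d = n + 2 + j := ⟨d - (n + 2), by simp at hd; omega⟩
  have hαj := coeff_eq_of_sub_comp_one_sub_X_eq hlow hdeg hP (by simp at hd; omega : j ≤ n + 1)
  rw [hcoeff, if_pos hd] at hαj
  rw [hαj, show n + 2 + j - (n + 1) - 1 = j by omega, show 2 * n + 2 - 1 = 2 * n + 1 by omega,
    show n + 1 - 1 = n by omega]
  push_cast
  ring
end

section
/- Let ℓ ≥ 1 and let g(r) = Σ_{d=ℓ}^{2ℓ} β_d r^d be a real polynomial with nonzero coefficients only in degrees ℓ through 2ℓ. If g(r) = g(1-r) for all real r, then g(r) = β_{2ℓ} · (-1)^ℓ · (r(1-r))^ℓ. -/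
/-!
The polynomial `g = ∑ β_d X^d` is divisible by `X^ℓ`; substituting `1 - X` and using the symmetry
it is also divisible by `(1 - X)^ℓ`. As `X` and `X - 1` are coprime, the monic polynomial
`(X (X - 1))^ℓ` of degree `2ℓ ≥ deg g` divides `g`, so `g` is a constant multiple of it, the
constant being read off from the coefficient of `X^{2ℓ}`.
-/

open Polynomial

namespace Polynomial

variable {R : Type*} [CommRing R]

theorem eq_C_coeff_mul_of_monic_of_dvd_of_natDegree_le {p q : R[X]} (hp : p.Monic)
    (hdvd : p ∣ q) (hdeg : q.natDegree ≤ p.natDegree) :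
    q = C (q.coeff p.natDegree) * p := by
  have hq := eq_leadingCoeff_mul_of_monic_of_dvd_of_natDegree_le hp hdvd hdeg
  have htop := congrArg (coeff · p.natDegree) hq
  simp only [coeff_C_mul, hp.coeff_natDegree, mul_one] at htop
  rwa [← htop] at hq

theorem X_mul_X_sub_one_pow_dvd_of_comp_one_sub_X_eq {p : R[X]} {n : ℕ}
    (hdvd : X ^ n ∣ p) (hsym : p.comp (1 - X) = p) : (X * (X - 1)) ^ n ∣ p := by
  have hsub : (1 - X : R[X]) ^ n ∣ p := by
    have : (X ^ n).comp (1 - X) ∣ p.comp (1 - X) := _root_.map_dvd (compRingHom (1 - X)) hdvd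
    rwa [hsym, X_pow_comp] at this
  have hsub' : (X - 1 : R[X]) ^ n ∣ p := by
    rw [← neg_sub, neg_pow, mul_comm]
    exact (Units.mul_right_dvd (u := (-1) ^ n)).mpr hsub
  rw [mul_pow]
  exact (IsCoprime.pow ⟨1, -1, by ring⟩).mul_dvd hdvd hsub'

theorem monic_X_mul_X_sub_one : (X * (X - 1) : R[X]).Monic :=
  monic_X.mul (by simpa using monic_X_sub_C (1 : R))

theorem natDegree_X_mul_X_sub_one [Nontrivial R] : (X * (X - 1) : R[X]).natDegree = 2 := by
  rw [monic_X.natDegree_mul (by simpa using monic_X_sub_C (1 : R)), natDegree_X,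
    ← C_1, natDegree_X_sub_C]

end Polynomial

theorem stmt1_general (ℓ : ℕ) (β : ℕ → ℝ)
    (hsym : ∀ r : ℝ,
      (∑ d ∈ Finset.Icc ℓ (2 * ℓ), β d * r ^ d) =
        ∑ d ∈ Finset.Icc ℓ (2 * ℓ), β d * (1 - r) ^ d) :
    ∀ r : ℝ,
      (∑ d ∈ Finset.Icc ℓ (2 * ℓ), β d * r ^ d) =
        β (2 * ℓ) * (-1 : ℝ) ^ ℓ * (r * (1 - r)) ^ ℓ := by
  set g : ℝ[X] := ∑ d ∈ Finset.Icc ℓ (2 * ℓ), C (β d) * X ^ d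
  have heval (r : ℝ) : g.eval r = ∑ d ∈ Finset.Icc ℓ (2 * ℓ), β d * r ^ d := by
    simp [g, eval_finsetSum]
  have hcoeff (k : ℕ) : g.coeff k = if ℓ ≤ k ∧ k ≤ 2 * ℓ then β k else 0 := by
    simp [g]
  have hcomp : g.comp (1 - X) = g := funext fun r => by simpa [heval] using (hsym r).symm
  have hdvd : X ^ ℓ ∣ g := X_pow_dvd_iff.mpr fun d hd => by rw [hcoeff, if_neg (by omega)]
  have hdeg : g.natDegree ≤ ((X * (X - 1) : ℝ[X]) ^ ℓ).natDegree := by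
    rw [monic_X_mul_X_sub_one.natDegree_pow, natDegree_X_mul_X_sub_one, mul_comm,
      natDegree_le_iff_coeff_eq_zero]
    exact fun d hd => by rw [hcoeff, if_neg (by omega)]
  have hg := eq_C_coeff_mul_of_monic_of_dvd_of_natDegree_le (monic_X_mul_X_sub_one.pow ℓ)
    (X_mul_X_sub_one_pow_dvd_of_comp_one_sub_X_eq hdvd hcomp) hdeg
  rw [monic_X_mul_X_sub_one.natDegree_pow, natDegree_X_mul_X_sub_one, hcoeff,
    if_pos (by omega)] at hg
  intro r
  rw [← heval, hg]
  simp only [eval_mul, eval_C, eval_pow, eval_X, eval_sub, eval_one]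
  rw [mul_assoc, ← mul_pow]
  ring_nf

theorem stmt1 (ℓ : ℕ) (hℓ : 1 ≤ ℓ) (β : ℕ → ℝ)
    (hsym : ∀ r : ℝ,
      (∑ d ∈ Finset.Icc ℓ (2 * ℓ), β d * r ^ d) =
        ∑ d ∈ Finset.Icc ℓ (2 * ℓ), β d * (1 - r) ^ d) :
    ∀ r : ℝ,
      (∑ d ∈ Finset.Icc ℓ (2 * ℓ), β d * r ^ d) =
        β (2 * ℓ) * (-1 : ℝ) ^ ℓ * (r * (1 - r)) ^ ℓ :=
  stmt1_general ℓ β hsym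
end

section
/- Let d ≥ 1 and let f(r) = Σ_{j=d+1}^{2d} γ_j r^j be a real polynomial with nonzero coefficients only in degrees d+1 through 2d. If f(r) = f(1-r) for all real r, then f is the zero polynomial. -/
/-!
View the sum as a polynomial `P`. It is divisible by `X ^ (d + 1)`, and the symmetry
`P = P.comp (1 - X)` transports this to `(1 - X) ^ (d + 1) ∣ P`. The two factors are coprime,
so a product of degree `2 d + 2` divides `P`, which has degree at most `2 d`; hence `P = 0`.
-/

open Polynomial

namespace Polynomial

variable {R : Type*} [CommRing R]

theorem one_sub_X_pow_dvd_comp_one_sub_X {p : R[X]} {n : ℕ} (h : X ^ n ∣ p) :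
    (1 - X) ^ n ∣ p.comp (1 - X) := by
  obtain ⟨q, rfl⟩ := h
  exact ⟨q.comp (1 - X), by simp [mul_comp]⟩

theorem natDegree_one_sub_X [Nontrivial R] : (1 - X : R[X]).natDegree = 1 := by
  rw [← neg_sub, natDegree_neg, ← C_1, natDegree_X_sub_C]

theorem eq_zero_of_X_pow_dvd_of_comp_one_sub_X_eq [IsDomain R] {p : R[X]} {n : ℕ}
    (hX : X ^ n ∣ p) (hsym : p.comp (1 - X) = p) (hdeg : p.natDegree < 2 * n) : p = 0 := by
  have h1X : (1 - X) ^ n ∣ p := hsym ▸ one_sub_X_pow_dvd_comp_one_sub_X hX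
  have hprod : X ^ n * (1 - X) ^ n ∣ p :=
    (IsCoprime.pow (show IsCoprime (X : R[X]) (1 - X) from ⟨1, 1, by ring⟩)).mul_dvd hX h1X
  by_contra hp
  have hone_sub_X : (1 - X : R[X]) ≠ 0 := ne_zero_of_natDegree_gt (n := 0) (by
    rw [natDegree_one_sub_X]; exact one_pos)
  have hle := natDegree_le_of_dvd hprod hp
  rw [natDegree_mul (pow_ne_zero _ X_ne_zero) (pow_ne_zero _ hone_sub_X), natDegree_pow,
    natDegree_pow, natDegree_X, natDegree_one_sub_X] at hle
  omega

end Polynomial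

theorem stmt2_general (d : ℕ) (γ : ℕ → ℝ)
    (hsym : ∀ r : ℝ,
      (∑ j ∈ Finset.Icc (d + 1) (2 * d), γ j * r ^ j) =
        ∑ j ∈ Finset.Icc (d + 1) (2 * d), γ j * (1 - r) ^ j) :
    ∀ r : ℝ, (∑ j ∈ Finset.Icc (d + 1) (2 * d), γ j * r ^ j) = 0 := by
  set P : ℝ[X] := ∑ j ∈ Finset.Icc (d + 1) (2 * d), C (γ j) * X ^ j
  have hP_eval (r : ℝ) : P.eval r = ∑ j ∈ Finset.Icc (d + 1) (2 * d), γ j * r ^ j := by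
    simp [P, eval_finsetSum]
  have hP_symm : P.comp (1 - X) = P := Polynomial.funext fun r => by
    rw [eval_comp, eval_sub, eval_one, eval_X, hP_eval, hP_eval, ← hsym r]
  have hX_dvd : X ^ (d + 1) ∣ P := Finset.dvd_sum fun j hj =>
    (pow_dvd_pow X (Finset.mem_Icc.mp hj).1).mul_left _
  have hP_deg : P.natDegree ≤ 2 * d := natDegree_sum_le_of_forall_le _ _ fun j hj =>
    (natDegree_C_mul_le _ _).trans ((natDegree_X_pow j).le.trans (Finset.mem_Icc.mp hj).2)
  have hP_zero : P = 0 := eq_zero_of_X_pow_dvd_of_comp_one_sub_X_eq hX_dvd hP_symm (by omega)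
  intro r
  rw [← hP_eval, hP_zero, eval_zero]

theorem stmt2 (d : ℕ) (hd : 1 ≤ d) (γ : ℕ → ℝ)
    (hsym : ∀ r : ℝ,
      (∑ j ∈ Finset.Icc (d + 1) (2 * d), γ j * r ^ j) =
        ∑ j ∈ Finset.Icc (d + 1) (2 * d), γ j * (1 - r) ^ j) :
    ∀ r : ℝ, (∑ j ∈ Finset.Icc (d + 1) (2 * d), γ j * r ^ j) = 0 :=
  stmt2_general d γ hsym
end

section
/- For every ℓ ≥ 1, the determinant of the ℓ×ℓ matrix C with entries C_{ij} = binom(ℓ+i, j) for 1 ≤ i, j ≤ ℓ equals binom(2ℓ, ℓ). In particular it is nonzero. -/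
/-!
Let `A = (binom(m + i, j))` for `0 ≤ i, j ≤ n`; the matrix of the theorem is `A` (with
`m = n = ℓ`) with its first row and column removed. Chu–Vandermonde factors `A` as the Pascal
matrix `(binom(i, k))` times the upper unitriangular Toeplitz matrix `(binom(m, j - k))`, so
`det A = 1` and the minor is the `(0, 0)` entry of `A⁻¹`. Chu–Vandermonde with the negative upper
index `-(m + 1)` shows that `A` sends the vector `(binom(-(m + 1), n - j))_j` to `(-1)ⁿ e₀`, so that
entry is `(-1)ⁿ binom(-(m + 1), n) = binom(m + n, n)`.
-/

open Finset Matrix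

lemma Ring.choose_neg_natCast_add_one (m k : ℕ) :
    Ring.choose (-((m : ℤ) + 1)) k = (-1) ^ k * ((m + k).choose k : ℤ) := by
  rw [Ring.choose_neg, Units.smul_def, Int.coe_negOnePow_natCast, smul_eq_mul,
    show (m : ℤ) + 1 + k - 1 = ((m + k : ℕ) : ℤ) by push_cast; ring, Ring.choose_natCast]

lemma Ring.choose_natCast_sub_one_of_le {i n : ℕ} (hi : i ≤ n) :
    Ring.choose ((i : ℤ) - 1) n = if i = 0 then (-1) ^ n else 0 := by
  split_ifs with h
  · simpa [h] using Ring.choose_neg_natCast_add_one 0 n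
  · rw [show (i : ℤ) - 1 = ((i - 1 : ℕ) : ℤ) by omega, Ring.choose_natCast,
      Nat.choose_eq_zero_of_lt (by omega), Nat.cast_zero]

section

variable (m n : ℕ)

def shiftedPascal : Matrix (Fin n) (Fin n) ℤ := of fun i j => ((m + i).choose j : ℤ)

def pascalLower : Matrix (Fin n) (Fin n) ℤ := of fun i k => ((i : ℕ).choose k : ℤ)

def binomialToeplitzUpper : Matrix (Fin n) (Fin n) ℤ :=
  of fun k j => if k ≤ j then (m.choose (j - k) : ℤ) else 0

lemma pascalLower_mul_binomialToeplitzUpper :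
    pascalLower n * binomialToeplitzUpper m n = shiftedPascal m n := by
  ext i j
  simp only [mul_apply, pascalLower, binomialToeplitzUpper, shiftedPascal, of_apply, mul_ite,
    mul_zero]
  rw [← sum_filter, filter_ge_eq_Iic, add_comm m, Nat.add_choose_eq,
    Nat.sum_antidiagonal_eq_sum_range_succ (fun a b => (i : ℕ).choose a * m.choose b),
    Nat.range_succ_eq_Iic, ← Fin.map_valEmbedding_Iic, sum_map]
  push_cast
  rfl

lemma det_pascalLower : (pascalLower n).det = 1 := by
  rw [det_of_isLowerTriangular _ fun i j (hij : i < j) => ?_]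
  · simp [pascalLower]
  · simp [pascalLower, Nat.choose_eq_zero_of_lt (Fin.lt_def.mp hij)]

lemma det_binomialToeplitzUpper : (binomialToeplitzUpper m n).det = 1 := by
  rw [det_of_isUpperTriangular fun i j (hij : j < i) => ?_]
  · simp [binomialToeplitzUpper]
  · simp [binomialToeplitzUpper, not_le.mpr hij]

lemma det_shiftedPascal : (shiftedPascal m n).det = 1 := by
  rw [← pascalLower_mul_binomialToeplitzUpper, det_mul, det_pascalLower,
    det_binomialToeplitzUpper, one_mul]

lemma shiftedPascal_mulVec_choose_neg :
    shiftedPascal m (n + 1) *ᵥ (fun j => Ring.choose (-((m : ℤ) + 1)) (n - j)) =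
      Pi.single 0 ((-1) ^ n) := by
  ext i
  have hvandermonde := Ring.add_choose_eq n (Commute.all ((m + i : ℕ) : ℤ) (-((m : ℤ) + 1)))
  rw [Nat.sum_antidiagonal_eq_sum_range_succ
      (fun a b => Ring.choose ((m + i : ℕ) : ℤ) a * Ring.choose (-((m : ℤ) + 1)) b),
    ← Fin.sum_univ_eq_sum_range,
    show ((m + i : ℕ) : ℤ) + -((m : ℤ) + 1) = (i : ℕ) - 1 by push_cast; ring,
    Ring.choose_natCast_sub_one_of_le (Nat.lt_succ_iff.mp i.isLt)] at hvandermonde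
  simp only [mulVec, dotProduct, shiftedPascal, of_apply, ← Ring.choose_natCast, ← hvandermonde,
    Pi.single_apply, Fin.ext_iff, Fin.val_zero]

lemma det_shiftedPascal_submatrix_succ :
    ((shiftedPascal m (n + 1)).submatrix Fin.succ Fin.succ).det = (m + n).choose n := by
  set z : Fin (n + 1) → ℤ := fun j => Ring.choose (-((m : ℤ) + 1)) (n - j)
  have hsolve : (shiftedPascal m (n + 1)).adjugate *ᵥ (shiftedPascal m (n + 1) *ᵥ z) = z := by
    rw [mulVec_mulVec, adjugate_mul, det_shiftedPascal, one_smul, one_mulVec]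
  have h00 := congrFun hsolve 0
  rw [shiftedPascal_mulVec_choose_neg, mulVec_single] at h00
  simp only [z, Fin.val_zero, Nat.sub_zero, Ring.choose_neg_natCast_add_one, Pi.smul_apply,
    col_apply, MulOpposite.smul_eq_mul_unop, MulOpposite.unop_op,
    adjugate_fin_succ_eq_det_submatrix, Fin.succAbove_zero, add_zero, pow_zero, one_mul] at h00
  exact mul_right_cancel₀ (pow_ne_zero n (by norm_num : (-1 : ℤ) ≠ 0)) (h00.trans (mul_comm _ _))

end

theorem stmt3_general (ℓ : ℕ) :
    Matrix.det (fun i j : Fin ℓ => (Nat.choose (ℓ + (i : ℕ) + 1) ((j : ℕ) + 1) : ℤ)) =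
      (Nat.choose (2 * ℓ) ℓ : ℤ) ∧
    Matrix.det (fun i j : Fin ℓ => (Nat.choose (ℓ + (i : ℕ) + 1) ((j : ℕ) + 1) : ℤ)) ≠ 0 := by
  have hminor : (fun i j : Fin ℓ => (Nat.choose (ℓ + (i : ℕ) + 1) ((j : ℕ) + 1) : ℤ)) =
      (shiftedPascal ℓ (ℓ + 1)).submatrix Fin.succ Fin.succ := by
    ext i j
    simp [shiftedPascal, add_assoc]
  rw [hminor, det_shiftedPascal_submatrix_succ, ← two_mul]
  exact ⟨rfl, Nat.cast_ne_zero.mpr (Nat.choose_pos (Nat.le_mul_of_pos_left ℓ two_pos)).ne'⟩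

theorem stmt3 (ℓ : ℕ) (hℓ : 1 ≤ ℓ) :
    Matrix.det (fun i j : Fin ℓ => (Nat.choose (ℓ + (i : ℕ) + 1) ((j : ℕ) + 1) : ℤ)) =
      (Nat.choose (2 * ℓ) ℓ : ℤ) ∧
    Matrix.det (fun i j : Fin ℓ => (Nat.choose (ℓ + (i : ℕ) + 1) ((j : ℕ) + 1) : ℤ)) ≠ 0 :=
  stmt3_general ℓ
end

section
/- Let ℓ ≥ 1 and d be an integer with ℓ+1 ≤ d ≤ 2ℓ. Then the coefficients α_j = 2(-1)^{j-ℓ-1} binom(2ℓ-1,ℓ-1) binom(ℓ, j-ℓ-1)(2ℓ-j+1)/((j-1)j) satisfy α_d = (-1)^d Σ_{j=d}^{2ℓ} binom(j,d) α_j. -/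
noncomputable def uu (ℓ n m : ℕ) : ℝ :=
  (Nat.choose (ℓ + 1 + m) (ℓ + 1 + n) : ℝ) * (-1) ^ m * (Nat.choose ℓ m : ℝ) *
    ((ℓ : ℝ) - m) / (((ℓ : ℝ) + m) * ((ℓ : ℝ) + m + 1))

lemma cert (ℓ n m : ℕ) (hℓ : 1 ≤ ℓ) (hnm : n ≤ m) (hm : m < ℓ) :
    ((n : ℝ) + 1) * ((ℓ : ℝ) + n + 2) * uu ℓ (n + 1) m
      - ((ℓ : ℝ) - n - 1) * ((ℓ : ℝ) + n) * uu ℓ n m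
    = ((m : ℝ) + 1) * ((m : ℝ) + 1 - n) * uu ℓ n (m + 1)
      - (m : ℝ) * ((m : ℝ) - n) * uu ℓ n m := by
  have hℓR : (1 : ℝ) ≤ (ℓ : ℝ) := by exact_mod_cast hℓ
  have hnmR : (n : ℝ) ≤ (m : ℝ) := by exact_mod_cast hnm
  have hmR : (m : ℝ) ≤ (ℓ : ℝ) := by exact_mod_cast hm.le
  have d1 : ((ℓ : ℝ) + m) ≠ 0 := by positivity
  have d2 : ((ℓ : ℝ) + m + 1) ≠ 0 := by positivity
  have d3 : ((ℓ : ℝ) + m + 2) ≠ 0 := by positivity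
  have d4 : ((ℓ : ℝ) + n + 2) ≠ 0 := by positivity
  have d5 : ((m : ℝ) + 1) ≠ 0 := by positivity
  have d6 : ((m : ℝ) + 1 - n) ≠ 0 := by nlinarith
  have e1 : (Nat.choose (ℓ + 1 + m) (ℓ + 2 + n) : ℝ) * ((ℓ : ℝ) + n + 2)
      = (Nat.choose (ℓ + 1 + m) (ℓ + 1 + n) : ℝ) * ((m : ℝ) - n) := by
    have h := Nat.choose_succ_right_eq (ℓ + 1 + m) (ℓ + 1 + n)
    rw [show ℓ + 1 + m - (ℓ + 1 + n) = m - n by omega,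
        show ℓ + 1 + n + 1 = ℓ + 2 + n by omega] at h
    have h' := congrArg (Nat.cast : ℕ → ℝ) h
    push_cast [Nat.cast_sub hnm] at h'
    linear_combination h'
  have e2 : (Nat.choose (ℓ + 2 + m) (ℓ + 1 + n) : ℝ) * ((m : ℝ) + 1 - n)
      = (Nat.choose (ℓ + 1 + m) (ℓ + 1 + n) : ℝ) * ((ℓ : ℝ) + m + 2) := by
    have h := Nat.choose_mul_succ_eq (ℓ + 1 + m) (ℓ + 1 + n)
    rw [show ℓ + 1 + m + 1 - (ℓ + 1 + n) = m + 1 - n by omega,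
        show ℓ + 1 + m + 1 = ℓ + 2 + m by omega] at h
    have h' := congrArg (Nat.cast : ℕ → ℝ) h
    push_cast [Nat.cast_sub (by omega : n ≤ m + 1)] at h'
    linear_combination -h'
  have e3 : (Nat.choose ℓ (m + 1) : ℝ) * ((m : ℝ) + 1)
      = (Nat.choose ℓ m : ℝ) * ((ℓ : ℝ) - m) := by
    have h := Nat.choose_succ_right_eq ℓ m
    have h' := congrArg (Nat.cast : ℕ → ℝ) h
    push_cast [Nat.cast_sub hm.le] at h'
    linear_combination h'
  have hB : (Nat.choose (ℓ + 1 + m) (ℓ + 2 + n) : ℝ)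
      = (Nat.choose (ℓ + 1 + m) (ℓ + 1 + n) : ℝ) * ((m : ℝ) - n) / ((ℓ : ℝ) + n + 2) := by
    rw [eq_div_iff d4]; linear_combination e1
  have hA' : (Nat.choose (ℓ + 2 + m) (ℓ + 1 + n) : ℝ)
      = (Nat.choose (ℓ + 1 + m) (ℓ + 1 + n) : ℝ) * ((ℓ : ℝ) + m + 2) / ((m : ℝ) + 1 - n) := by
    rw [eq_div_iff d6]; linear_combination e2
  have hC' : (Nat.choose ℓ (m + 1) : ℝ)
      = (Nat.choose ℓ m : ℝ) * ((ℓ : ℝ) - m) / ((m : ℝ) + 1) := by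
    rw [eq_div_iff d5]; linear_combination e3
  simp only [uu]
  rw [show ℓ + 1 + (n + 1) = ℓ + 2 + n by omega,
      show ℓ + 1 + (m + 1) = ℓ + 2 + m by omega]
  rw [hB, hA', hC']
  push_cast
  field_simp
  ring

lemma key (ℓ : ℕ) (hℓ : 1 ≤ ℓ) : ∀ n, n < ℓ →
    ∑ m ∈ Finset.Icc n (ℓ - 1), uu ℓ n m
      = (-1 : ℝ) ^ (ℓ + 1) * (Nat.choose ℓ n : ℝ) * ((ℓ : ℝ) - n) /
        (((ℓ : ℝ) + n) * ((ℓ : ℝ) + n + 1)) := by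
  suffices H : ∀ k, ∀ n, n < ℓ → ℓ - n ≤ k →
      ∑ m ∈ Finset.Icc n (ℓ - 1), uu ℓ n m
        = (-1 : ℝ) ^ (ℓ + 1) * (Nat.choose ℓ n : ℝ) * ((ℓ : ℝ) - n) /
          (((ℓ : ℝ) + n) * ((ℓ : ℝ) + n + 1)) by
    intro n hn; exact H ℓ n hn (by omega)
  intro k
  induction k with
  | zero => intro n hn h; omega
  | succ k IH =>
    intro n hn hk
    by_cases hne : n = ℓ - 1
    · subst hne
      rw [Finset.Icc_self, Finset.sum_singleton]
      simp only [uu]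
      rw [show ℓ + 1 + (ℓ - 1) = 2 * ℓ by omega, Nat.choose_self,
          show ℓ + 1 = (ℓ - 1) + 2 by omega, pow_add]
      push_cast
      ring
    · have hn1 : n + 1 < ℓ := by omega
      have ih := IH (n + 1) hn1 (by omega)
      have hIcc : Finset.Icc n (ℓ - 1) = Finset.Ico n ℓ := by
        rw [← Finset.Ico_add_one_right_eq_Icc]; congr 1; omega
      have hIcc' : Finset.Icc (n + 1) (ℓ - 1) = Finset.Ico (n + 1) ℓ := by
        rw [← Finset.Ico_add_one_right_eq_Icc]; congr 1; omega
      set G : ℕ → ℝ := fun m => (m : ℝ) * ((m : ℝ) - n) * uu ℓ n m with hG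
      have tele : ∑ m ∈ Finset.Ico n ℓ, (G (m + 1) - G m) = G ℓ - G n := by
        rw [Finset.sum_Ico_eq_sum_range]
        have := Finset.sum_range_sub (fun i => G (n + i)) (ℓ - n)
        simp only [← add_assoc] at this ⊢
        rw [this, show n + (ℓ - n) = ℓ by omega, add_zero]
      have hGℓ : G ℓ = 0 := by simp [hG, uu]
      have hGn : G n = 0 := by simp [hG]
      have hcertsum : ∑ m ∈ Finset.Ico n ℓ,
          (((n : ℝ) + 1) * ((ℓ : ℝ) + n + 2) * uu ℓ (n + 1) m
            - ((ℓ : ℝ) - n - 1) * ((ℓ : ℝ) + n) * uu ℓ n m) = 0 := by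
        rw [Finset.sum_congr rfl (fun m hm => ?_), tele, hGℓ, hGn, sub_zero]
        have hm' := Finset.mem_Ico.mp hm
        have hc := cert ℓ n m hℓ hm'.1 hm'.2
        simp only [hG]
        push_cast
        linear_combination hc
      rw [Finset.sum_sub_distrib] at hcertsum
      rw [← Finset.mul_sum, ← Finset.mul_sum] at hcertsum
      have hfirst : ∑ m ∈ Finset.Ico n ℓ, uu ℓ (n + 1) m
          = ∑ m ∈ Finset.Ico (n + 1) ℓ, uu ℓ (n + 1) m := by
        rw [Finset.sum_eq_sum_Ico_succ_bot (by omega : n < ℓ)]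
        have h0 : uu ℓ (n + 1) n = 0 := by
          simp only [uu]
          rw [Nat.choose_eq_zero_of_lt (by omega)]
          simp
        rw [h0, zero_add]
      rw [hfirst, ← hIcc', ← hIcc, ih] at hcertsum
      have hnR : ((n : ℝ)) + 1 < (ℓ : ℝ) := by exact_mod_cast hn1
      have hd1 : ((ℓ : ℝ) - n - 1) ≠ 0 := by nlinarith
      have hd2 : ((ℓ : ℝ) + n) ≠ 0 := by positivity
      have hd3 : ((ℓ : ℝ) + n + 1) ≠ 0 := by positivity
      have hd4 : ((ℓ : ℝ) + n + 2) ≠ 0 := by positivity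
      have hd5 : ((n : ℝ) + 1) ≠ 0 := by positivity
      have hch : (Nat.choose ℓ (n + 1) : ℝ)
          = (Nat.choose ℓ n : ℝ) * ((ℓ : ℝ) - n) / ((n : ℝ) + 1) := by
        rw [eq_div_iff hd5]
        have h := Nat.choose_succ_right_eq ℓ n
        have h' := congrArg (Nat.cast : ℕ → ℝ) h
        push_cast [Nat.cast_sub (by omega : n ≤ ℓ)] at h'
        linear_combination h'
      have hsolve : ∑ m ∈ Finset.Icc n (ℓ - 1), uu ℓ n m
          = ((n : ℝ) + 1) * ((ℓ : ℝ) + n + 2) *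
              ((-1 : ℝ) ^ (ℓ + 1) * (Nat.choose ℓ (n + 1) : ℝ) * ((ℓ : ℝ) - ((n : ℝ) + 1)) /
                (((ℓ : ℝ) + ((n : ℝ) + 1)) * ((ℓ : ℝ) + ((n : ℝ) + 1) + 1))) /
              (((ℓ : ℝ) - n - 1) * ((ℓ : ℝ) + n)) := by
        rw [eq_div_iff (mul_ne_zero hd1 hd2)]
        push_cast at hcertsum ⊢
        linear_combination -hcertsum
      rw [hsolve, hch]
      field_simp
      ring

theorem stmt4 (ℓ : ℕ) (hℓ : 1 ≤ ℓ) (α : ℕ → ℝ)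
    (hα : ∀ j, α j = 2 * (-1 : ℝ) ^ (j - ℓ - 1) * (Nat.choose (2 * ℓ - 1) (ℓ - 1) : ℝ) *
      (Nat.choose ℓ (j - ℓ - 1) : ℝ) * (2 * ℓ - j + 1) / ((j - 1) * j))
    (d : ℕ) (hd1 : ℓ + 1 ≤ d) (hd2 : d ≤ 2 * ℓ) :
    α d = (-1 : ℝ) ^ d * ∑ j ∈ Finset.Icc d (2 * ℓ), (Nat.choose j d : ℝ) * α j := by
  obtain ⟨n, rfl⟩ := Nat.exists_eq_add_of_le hd1
  have hn : n < ℓ := by omega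
  set C : ℝ := (Nat.choose (2 * ℓ - 1) (ℓ - 1) : ℝ) with hC
  have hterm : ∀ m : ℕ, (Nat.choose (ℓ + 1 + m) (ℓ + 1 + n) : ℝ) * α (ℓ + 1 + m)
      = 2 * C * uu ℓ n m := by
    intro m
    rw [hα]
    rw [show ℓ + 1 + m - ℓ - 1 = m by omega]
    simp only [uu]
    have h1R : (1 : ℝ) ≤ (ℓ : ℝ) := by exact_mod_cast hℓ
    push_cast
    ring
  have hmap : Finset.Icc (ℓ + 1 + n) (2 * ℓ)
      = (Finset.Icc n (ℓ - 1)).map (addLeftEmbedding (ℓ + 1)) := by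
    rw [Finset.map_add_left_Icc]; congr 1; omega
  rw [hmap, Finset.sum_map]
  simp only [addLeftEmbedding_apply]
  rw [Finset.sum_congr rfl (fun m _ => hterm m), ← Finset.mul_sum,
    key ℓ hℓ n hn]
  rw [hα]
  rw [show ℓ + 1 + n - ℓ - 1 = n by omega]
  rw [pow_add (-1 : ℝ) (ℓ + 1) n]
  have h1R : (1 : ℝ) ≤ (ℓ : ℝ) := by exact_mod_cast hℓ
  have hnn : (0 : ℝ) ≤ (n : ℝ) := Nat.cast_nonneg n
  have hdA : ((ℓ : ℝ) + 1 + n - 1) ≠ 0 := by nlinarith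
  have hdB : ((ℓ : ℝ) + 1 + n) ≠ 0 := by positivity
  have hdC : ((ℓ : ℝ) + n) ≠ 0 := by positivity
  have hdD : ((ℓ : ℝ) + n + 1) ≠ 0 := by positivity
  rcases Nat.even_or_odd (ℓ + 1) with hpar | hpar
  · rw [(hpar.neg_one_pow : (-1:ℝ)^(ℓ+1) = 1)]
    push_cast
    field_simp
    ring
  · rw [(hpar.neg_one_pow : (-1:ℝ)^(ℓ+1) = -1)]
    push_cast
    field_simp
    ring
end

section
/- Let ℓ ≥ 1 and define α_j = 2(-1)^{j-ℓ-1} · binom(2ℓ-1, ℓ-1) · binom(ℓ, j-ℓ-1) · (2ℓ-j+1)/((j-1)j) for ℓ+1 ≤ j ≤ 2ℓ. Then Σ_{j=ℓ+1}^{2ℓ} α_j = 1. -/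
/-!
After the substitution `j = ℓ + 1 + k`, partial fractions split the summand into
`2ℓ / (ℓ + k) - (2ℓ + 1) / (ℓ + 1 + k)`, and the range may be extended by the vanishing term
`j = 2ℓ + 1`. Both halves are then alternating binomial sums, evaluated by the discrete beta
integral `∑ₖ (-1)ᵏ C(n, k) / (x + k) = n! / ∏_{k ≤ n} (x + k)` (Pascal's rule and induction on
`n`). What remains is `C(2ℓ, ℓ) · ℓ! · ℓ! / (2ℓ)! = 1`.
-/

open Finset Nat

theorem prod_range_succ_add_natCast {R : Type*} [CommSemiring R] (x : R) (n : ℕ) :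
    ∏ k ∈ range (n + 1), (x + k) = x * ∏ k ∈ range n, (x + 1 + k) := by
  rw [prod_range_succ', mul_comm]
  simp [add_assoc, add_comm (1 : R)]

theorem sum_range_succ_neg_one_pow_mul_choose {R : Type*} [CommRing R] (n : ℕ) (f : ℕ → R) :
    ∑ k ∈ range (n + 1 + 1), (-1) ^ k * ((n + 1).choose k : R) * f k =
      ∑ k ∈ range (n + 1), (-1) ^ k * (n.choose k : R) * (f k - f (k + 1)) := by
  have hshift :
      ∑ k ∈ range (n + 1), (-1) ^ (k + 1) * (n.choose (k + 1) : R) * f (k + 1) +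
        (-1) ^ 0 * (n.choose 0 : R) * f 0 =
      ∑ k ∈ range (n + 1), (-1) ^ k * (n.choose k : R) * f k := by
    rw [← sum_range_succ' (fun k => (-1) ^ k * (n.choose k : R) * f k), sum_range_succ]
    simp
  rw [sum_range_succ']
  simp only [choose_succ_succ', cast_add, pow_succ, mul_sub, mul_add, add_mul, sum_add_distrib,
    sum_sub_distrib, ← hshift]
  simp
  ring

theorem sum_range_neg_one_pow_mul_choose_div {K : Type*} [Field K] (n : ℕ) (x : K)
    (hx : ∀ k ≤ n, x + k ≠ 0) :
    ∑ k ∈ range (n + 1), (-1) ^ k * (n.choose k : K) / (x + k) =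
      n ! / ∏ k ∈ range (n + 1), (x + k) := by
  induction n generalizing x with
  | zero => simp
  | succ n ih =>
    have hx' : ∀ k ≤ n, x + 1 + k ≠ 0 := fun k hk => by
      simpa [add_assoc, add_comm (1 : K)] using hx (k + 1) (by omega)
    have hx0 : x ≠ 0 := by simpa using hx 0 (by omega)
    have hxn : x + 1 + n ≠ 0 := hx' n le_rfl
    have hQ : ∏ k ∈ range n, (x + 1 + k) ≠ 0 :=
      prod_ne_zero_iff.2 fun k hk => hx' k (mem_range.1 hk).le
    calc ∑ k ∈ range (n + 1 + 1), (-1) ^ k * ((n + 1).choose k : K) / (x + k)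
        = ∑ k ∈ range (n + 1), (-1) ^ k * (n.choose k : K) / (x + k) -
            ∑ k ∈ range (n + 1), (-1) ^ k * (n.choose k : K) / (x + 1 + k) := by
          simp only [div_eq_mul_inv]
          rw [sum_range_succ_neg_one_pow_mul_choose]
          simp only [mul_sub, sum_sub_distrib, cast_add, cast_one, add_assoc, add_comm (1 : K)]
      _ = n ! / (x * ∏ k ∈ range n, (x + 1 + k)) -
            n ! / ((∏ k ∈ range n, (x + 1 + k)) * (x + 1 + n)) := by
          rw [ih x fun k hk => hx k (by omega), ih (x + 1) hx', prod_range_succ_add_natCast,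
            prod_range_succ]
      _ = (n + 1)! / ∏ k ∈ range (n + 1 + 1), (x + k) := by
          rw [prod_range_succ_add_natCast, prod_range_succ, factorial_succ]
          field_simp
          push_cast
          ring

theorem cast_choose_mul_factorial_eq_prod {R : Type*} [CommSemiring R] (n m : ℕ) :
    ((n + m).choose m * m ! : R) = ∏ k ∈ range m, ((n : R) + 1 + k) := by
  rw [← cast_mul, mul_comm, ← ascFactorial_eq_factorial_mul_choose, ascFactorial_eq_prod_range]
  push_cast
  rfl

theorem two_mul_choose_sub_one {n : ℕ} (hn : n ≠ 0) :
    2 * (2 * n - 1).choose (n - 1) = (2 * n).choose n := by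
  obtain ⟨m, rfl⟩ := exists_eq_succ_of_ne_zero hn
  rw [show 2 * (m + 1) = (2 * m + 1) + 1 by ring, choose_succ_succ, choose_symm_half]
  simp [two_mul]

theorem sub_add_one_div_sub_one_mul_self {K : Type*} [Field K] (a x : K) (hx : x ≠ 0)
    (hx1 : x - 1 ≠ 0) : (a - x + 1) / ((x - 1) * x) = a / (x - 1) - (a + 1) / x := by
  field_simp
  ring

theorem stmt5 (ℓ : ℕ) (hℓ : 1 ≤ ℓ) (α : ℕ → ℝ)
    (hα : ∀ j, α j = 2 * (-1 : ℝ) ^ (j - ℓ - 1) * (Nat.choose (2 * ℓ - 1) (ℓ - 1) : ℝ) *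
      (Nat.choose ℓ (j - ℓ - 1) : ℝ) * (2 * ℓ - j + 1) / ((j - 1) * j)) :
    ∑ j ∈ Finset.Icc (ℓ + 1) (2 * ℓ), α j = 1 := by
  have hterm : ∀ k, α (ℓ + 1 + k) = ((2 * ℓ).choose ℓ : ℝ) *
      ((-1) ^ k * ℓ.choose k * (2 * ℓ / (ℓ + k) - (2 * ℓ + 1) / (ℓ + 1 + k))) := by
    intro k
    rw [hα, ← two_mul_choose_sub_one (by omega), show ℓ + 1 + k - ℓ - 1 = k by omega,
      mul_div_assoc]
    push_cast
    rw [sub_add_one_div_sub_one_mul_self _ _ (by positivity) (by ring_nf; positivity)]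
    ring
  have htop : α (2 * ℓ + 1) = 0 := by
    rw [hα]
    push_cast
    ring
  calc ∑ j ∈ Icc (ℓ + 1) (2 * ℓ), α j = ∑ k ∈ range (ℓ + 1), α (ℓ + 1 + k) := by
        rw [← add_zero (∑ j ∈ Icc (ℓ + 1) (2 * ℓ), α j), ← htop, ← sum_Icc_succ_top (by omega),
          ← Ico_add_one_right_eq_Icc, sum_Ico_eq_sum_range,
          show 2 * ℓ + 1 + 1 - (ℓ + 1) = ℓ + 1 by omega]
    _ = ((2 * ℓ).choose ℓ : ℝ) *
          (2 * ℓ * ∑ k ∈ range (ℓ + 1), (-1) ^ k * (ℓ.choose k : ℝ) / (ℓ + k) -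
            (2 * ℓ + 1) * ∑ k ∈ range (ℓ + 1), (-1) ^ k * (ℓ.choose k : ℝ) / (ℓ + 1 + k)) := by
        simp only [hterm, mul_sum, ← sum_sub_distrib]
        exact sum_congr rfl fun k _ => by ring
    _ = 1 := by
        rw [sum_range_neg_one_pow_mul_choose_div _ _ (fun k _ => by positivity),
          sum_range_neg_one_pow_mul_choose_div _ _ (fun k _ => by positivity),
          prod_range_succ_add_natCast, prod_range_succ, two_mul,
          ← cast_choose_mul_factorial_eq_prod]
        have hB : ((ℓ + ℓ).choose ℓ : ℝ) ≠ 0 := cast_ne_zero.2 (choose_pos (by omega)).ne'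
        field_simp
        ring
end

section
/- Let ℓ ≥ 1 and define α_j = 2(-1)^{j-ℓ-1} · binom(2ℓ-1, ℓ-1) · binom(ℓ, j-ℓ-1) · (2ℓ-j+1)/((j-1)j) for ℓ+1 ≤ j ≤ 2ℓ. Then Σ_{j=ℓ+1}^{2ℓ} j·α_j = 2. -/
/-!
Substituting `j = ℓ + 1 + k` and using `(ℓ - k) * binom(ℓ, k) = ℓ * binom(ℓ - 1, k)`, the sum becomes
`2 ℓ binom(2ℓ - 1, ℓ - 1) ∑_{k < ℓ} (-1)^k binom(ℓ - 1, k) / (ℓ + k)`. The alternating sum is the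
Beta value `B(ℓ, ℓ) = ((ℓ - 1)!)^2 / (2ℓ - 1)!`: by Pascal's rule, `∑_k (-1)^k binom(n, k) / (b + 1 + k)`
satisfies the same difference recursion in `n` as `n! b! / (n + b + 1)!`. Finally
`binom(2ℓ - 1, ℓ - 1) = 1 / (ℓ B(ℓ, ℓ))`.
-/

open Finset Nat

theorem alternating_sum_range_choose_succ_mul {R : Type*} [CommRing R] (f : ℕ → R) (n : ℕ) :
    ∑ k ∈ range (n + 2), (-1) ^ k * ((n + 1).choose k : R) * f k =
      ∑ k ∈ range (n + 1), (-1) ^ k * (n.choose k : R) * (f k - f (k + 1)) := by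
  have hpascal : ∑ k ∈ range (n + 2), (-1) ^ k * ((n + 1).choose k : R) * f k =
      ∑ k ∈ range (n + 2), (-1) ^ k * (n.choose k : R) * f k +
        ∑ k ∈ range (n + 1), (-1) ^ (k + 1) * (n.choose k : R) * f (k + 1) := by
    rw [sum_range_succ', sum_range_succ' (fun k => (-1) ^ k * (n.choose k : R) * f k)]
    simp only [choose_succ_succ, cast_add, mul_add, add_mul, sum_add_distrib, choose_zero_right]
    ring
  rw [hpascal, sum_range_succ _ (n + 1), choose_succ_self, cast_zero, mul_zero, zero_mul, add_zero]
  simp only [pow_succ, mul_neg_one, neg_mul, sum_neg_distrib, mul_sub, sum_sub_distrib]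
  ring

theorem cast_choose_succ_mul_sub {R : Type*} [CommRing R] {n k : ℕ} (hk : k ≤ n + 1) :
    ((n + 1).choose k : R) * (n + 1 - k) = (n + 1) * n.choose k := by
  have h := congrArg (Nat.cast : ℕ → R) (choose_mul_succ_eq n k)
  push_cast [Nat.cast_sub hk] at h
  rw [← h, mul_comm]

theorem alternating_sum_range_choose_div {K : Type*} [Field K] [CharZero K] (n b : ℕ) :
    ∑ k ∈ range (n + 1), (-1) ^ k * (n.choose k : K) / (b + 1 + k) =
      n ! * b ! / (n + b + 1)! := by
  induction n generalizing b with
  | zero =>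
    have : (b ! : K) ≠ 0 := mod_cast b.factorial_ne_zero
    rw [sum_range_one, zero_add, factorial_succ]
    push_cast
    field_simp
    simp
  | succ n ih =>
    calc ∑ k ∈ range (n + 2), (-1) ^ k * ((n + 1).choose k : K) / (b + 1 + k)
        = ∑ k ∈ range (n + 1), (-1) ^ k * (n.choose k : K) *
            (((b : K) + 1 + k)⁻¹ - ((b : K) + 1 + (k + 1 : ℕ))⁻¹) := by
          simpa only [div_eq_mul_inv] using
            alternating_sum_range_choose_succ_mul (fun k => ((b : K) + 1 + k)⁻¹) n
      _ = ∑ k ∈ range (n + 1), (-1) ^ k * (n.choose k : K) / (b + 1 + k) -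
            ∑ k ∈ range (n + 1), (-1) ^ k * (n.choose k : K) / ((b + 1 : ℕ) + 1 + k) := by
          rw [← sum_sub_distrib]
          refine sum_congr rfl fun k _ => ?_
          push_cast
          ring
      _ = n ! * b ! / (n + b + 1)! - n ! * (b + 1)! / (n + b + 1 + 1)! := by
          rw [ih, ih, show n + (b + 1) + 1 = n + b + 1 + 1 by ring]
      _ = (n + 1)! * b ! / (n + 1 + b + 1)! := by
          rw [show n + 1 + b + 1 = n + b + 1 + 1 by ring, factorial_succ (n + b + 1),
            factorial_succ b, factorial_succ n]
          have : ((n + b + 1)! : K) ≠ 0 := mod_cast (n + b + 1).factorial_ne_zero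
          have : (n + b + 1 + 1 : K) ≠ 0 := mod_cast (n + b + 1).succ_ne_zero
          push_cast
          field_simp
          ring

theorem stmt6 (ℓ : ℕ) (hℓ : 1 ≤ ℓ) (α : ℕ → ℝ)
    (hα : ∀ j, α j = 2 * (-1 : ℝ) ^ (j - ℓ - 1) * (Nat.choose (2 * ℓ - 1) (ℓ - 1) : ℝ) *
      (Nat.choose ℓ (j - ℓ - 1) : ℝ) * (2 * ℓ - j + 1) / ((j - 1) * j)) :
    ∑ j ∈ Finset.Icc (ℓ + 1) (2 * ℓ), (j : ℝ) * α j = 2 := by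
  obtain ⟨m, rfl⟩ : ∃ m, ℓ = m + 1 := ⟨ℓ - 1, by omega⟩
  have hterm : ∀ k ∈ range (m + 1), ((m + 1 + 1 + k : ℕ) : ℝ) * α (m + 1 + 1 + k) =
      2 * ((2 * m + 1).choose m : ℝ) * (m + 1) * ((-1) ^ k * (m.choose k : ℝ) / (m + 1 + k)) := by
    intro k hk
    have hkm : k ≤ m := Nat.lt_succ_iff.mp (mem_range.mp hk)
    rw [hα, show m + 1 + 1 + k - (m + 1) - 1 = k by omega,
      show 2 * (m + 1) - 1 = 2 * m + 1 by omega, Nat.add_sub_cancel]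
    have : (m : ℝ) + 1 + 1 + k - 1 ≠ 0 := by
      rw [show (m : ℝ) + 1 + 1 + k - 1 = m + 1 + k by ring]; positivity
    have : (m : ℝ) + 1 + 1 + k ≠ 0 := by positivity
    push_cast
    field_simp
    linear_combination ((2 * m + 1).choose m : ℝ) * (m + 1 + k) *
      cast_choose_succ_mul_sub (R := ℝ) (by omega : k ≤ m + 1)
  calc ∑ j ∈ Icc (m + 1 + 1) (2 * (m + 1)), (j : ℝ) * α j
      = ∑ k ∈ range (m + 1), ((m + 1 + 1 + k : ℕ) : ℝ) * α (m + 1 + 1 + k) := by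
        rw [← Ico_add_one_right_eq_Icc, sum_Ico_eq_sum_range,
          show 2 * (m + 1) + 1 - (m + 1 + 1) = m + 1 by omega]
    _ = 2 * ((2 * m + 1).choose m : ℝ) * (m + 1) * (m ! * m ! / (m + m + 1)!) := by
        rw [sum_congr rfl hterm, ← mul_sum, alternating_sum_range_choose_div]
    _ = 2 := by
        rw [cast_choose ℝ (by omega : m ≤ 2 * m + 1), show 2 * m + 1 - m = m + 1 by omega,
          show m + m + 1 = 2 * m + 1 by ring, factorial_succ m]
        have : ((2 * m + 1)! : ℝ) ≠ 0 := by positivity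
        push_cast
        field_simp
end

section
/- Let ℓ ≥ 2 and 2 ≤ d ≤ ℓ, and define α_j = 2(-1)^{j-ℓ-1} · binom(2ℓ-1, ℓ-1) · binom(ℓ, j-ℓ-1) · (2ℓ-j+1)/((j-1)j) for ℓ+1 ≤ j ≤ 2ℓ. Then Σ_{j=ℓ+1}^{2ℓ} binom(j, d) · α_j = 0. -/
/-!
Writing `j = ℓ + 1 + i`, the identities `binom(j, d) d (d - 1) = j (j - 1) binom(j - 2, d - 2)` and
`binom(ℓ, i) (ℓ - i) = ℓ binom(ℓ - 1, i)` cancel the denominator of `α_j`, so that up to the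
factor `2 binom(2ℓ - 1, ℓ - 1) ℓ / (d (d - 1))` the sum becomes
`∑_{i < ℓ} (-1)^i binom(ℓ - 1, i) binom(ℓ - 1 + i, d - 2)`. This is an `(ℓ - 1)`-th forward difference
of a polynomial in `i` of degree `d - 2 < ℓ - 1`, hence zero.
-/

open Finset fwdDiff

theorem fwdDiff_iter_choose_eq_zero_of_lt {m n : ℕ} (h : m < n) :
    Δ_[1] ^[n] (fun x ↦ x.choose m : ℕ → ℤ) = 0 := by
  obtain ⟨k, rfl⟩ := Nat.exists_eq_add_of_lt h
  have hconst : Δ_[1] ^[m] (fun x ↦ x.choose m : ℕ → ℤ) = fun _ ↦ 1 := by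
    simpa using fwdDiff_iter_choose 0 m
  rw [add_assoc, add_comm, Function.iterate_add_apply, hconst, Function.iterate_succ_apply,
    fwdDiff_const]
  exact Function.iterate_fixed (fwdDiff_const 1 0) k

theorem sum_range_neg_one_pow_mul_choose_mul_choose_add_eq_zero {m n : ℕ} (h : m < n) (a : ℕ) :
    ∑ i ∈ range (n + 1), (-1 : ℤ) ^ i * n.choose i * (a + i).choose m = 0 := by
  calc ∑ i ∈ range (n + 1), (-1 : ℤ) ^ i * n.choose i * (a + i).choose m
      = (-1) ^ n * ∑ i ∈ range (n + 1),
          ((-1 : ℤ) ^ (n - i) * n.choose i) • ((a + i • 1).choose m : ℤ) := by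
        rw [mul_sum]
        refine sum_congr rfl fun i hi ↦ ?_
        have hsign : (-1 : ℤ) ^ i = (-1) ^ n * (-1) ^ (n - i) := by
          have hin := mem_range.mp hi
          rw [← pow_add, show n + (n - i) = i + 2 * (n - i) by omega, pow_add, pow_mul]
          simp
        rw [hsign, smul_eq_mul, smul_eq_mul, mul_one]
        ring
    _ = 0 := by
        rw [← fwdDiff_iter_eq_sum_shift 1 (fun x ↦ x.choose m : ℕ → ℤ) n a,
          fwdDiff_iter_choose_eq_zero_of_lt h, Pi.zero_apply, mul_zero]

theorem Nat.add_two_choose_add_two_mul (n k : ℕ) :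
    (n + 2).choose (k + 2) * ((k + 2) * (k + 1)) = (n + 2) * (n + 1) * n.choose k := by
  rw [← mul_assoc, ← Nat.add_one_mul_choose_eq, mul_assoc, ← Nat.add_one_mul_choose_eq]
  ring

theorem choose_mul_alpha_eq {n i : ℕ} (hi : i ≤ n) (e : ℕ) (K : ℝ) :
    ((n + 1 + 1 + i).choose (e + 2) : ℝ) * (2 * (-1) ^ i * K * (n + 1).choose i *
      (2 * (n + 1 : ℝ) - (n + 1 + 1 + i) + 1) / ((n + 1 + 1 + i - 1) * (n + 1 + 1 + i))) =
    2 * K * (n + 1) / ((e + 2) * (e + 1)) * ((-1) ^ i * n.choose i * (n + i).choose e) := by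
  have hchoose : ((n + 1 + 1 + i).choose (e + 2) : ℝ) * ((e + 2) * (e + 1)) =
      (n + i + 2) * (n + i + 1) * (n + i).choose e := by
    rw [show n + 1 + 1 + i = n + i + 2 by omega]
    exact_mod_cast Nat.add_two_choose_add_two_mul (n + i) e
  have hchoose' : ((n + 1).choose i : ℝ) * (n + 1 - i) = (n + 1) * n.choose i := by
    have h := Nat.choose_mul_succ_eq n i
    rw [← Nat.cast_inj (R := ℝ)] at h
    push_cast [Nat.cast_sub (show i ≤ n + 1 by omega)] at h
    linarith
  rw [show (n + 1 + 1 + i - 1 : ℝ) = n + i + 1 by ring,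
    show 2 * (n + 1 : ℝ) - (n + 1 + 1 + i) + 1 = n + 1 - i by ring]
  field_simp
  linear_combination (K * (n + 1).choose i * (n + 1 - i)) * hchoose +
    (K * (n + i + 2) * (n + i + 1) * (n + i).choose e) * hchoose'

theorem stmt7_general (ℓ : ℕ) (d : ℕ) (hd1 : 2 ≤ d) (hd2 : d ≤ ℓ) (α : ℕ → ℝ)
    (hα : ∀ j, α j = 2 * (-1 : ℝ) ^ (j - ℓ - 1) * (Nat.choose (2 * ℓ - 1) (ℓ - 1) : ℝ) *
      (Nat.choose ℓ (j - ℓ - 1) : ℝ) * (2 * ℓ - j + 1) / ((j - 1) * j)) :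
    ∑ j ∈ Finset.Icc (ℓ + 1) (2 * ℓ), (Nat.choose j d : ℝ) * α j = 0 := by
  obtain ⟨n, rfl⟩ : ∃ n, ℓ = n + 1 := ⟨ℓ - 1, by omega⟩
  obtain ⟨e, rfl⟩ : ∃ e, d = e + 2 := ⟨d - 2, by omega⟩
  have hterm : ∀ i ∈ range (n + 1), ((n + 1 + 1 + i).choose (e + 2) : ℝ) * α (n + 1 + 1 + i) =
      2 * (2 * (n + 1) - 1).choose (n + 1 - 1) * (n + 1) / ((e + 2) * (e + 1)) *
        ((-1) ^ i * n.choose i * (n + i).choose e) := by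
    intro i hi
    rw [hα, show n + 1 + 1 + i - (n + 1) - 1 = i by omega]
    push_cast
    exact choose_mul_alpha_eq (Nat.lt_succ_iff.mp (mem_range.mp hi)) e _
  have halt : ∑ i ∈ range (n + 1), ((-1) ^ i * n.choose i * (n + i).choose e : ℝ) = 0 := by
    exact_mod_cast sum_range_neg_one_pow_mul_choose_mul_choose_add_eq_zero (by omega) n
  rw [← Ico_add_one_right_eq_Icc, sum_Ico_eq_sum_range,
    show 2 * (n + 1) + 1 - (n + 1 + 1) = n + 1 by omega, sum_congr rfl hterm, ← mul_sum, halt,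
    mul_zero]

theorem stmt7 (ℓ : ℕ) (hℓ : 2 ≤ ℓ) (d : ℕ) (hd1 : 2 ≤ d) (hd2 : d ≤ ℓ) (α : ℕ → ℝ)
    (hα : ∀ j, α j = 2 * (-1 : ℝ) ^ (j - ℓ - 1) * (Nat.choose (2 * ℓ - 1) (ℓ - 1) : ℝ) *
      (Nat.choose ℓ (j - ℓ - 1) : ℝ) * (2 * ℓ - j + 1) / ((j - 1) * j)) :
    ∑ j ∈ Finset.Icc (ℓ + 1) (2 * ℓ), (Nat.choose j d : ℝ) * α j = 0 :=
  stmt7_general ℓ d hd1 hd2 α hα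
end

section
/- Let ℓ ≥ 1 and define G_ℓ(r) = r - C_ℓ · r^{ℓ+1} · Σ_{i=0}^{ℓ-1} (-1)^i · binom(ℓ-1, i) · ((ℓ+1)!·(ℓ+i-1)! / ((ℓ-1)!·(ℓ+i+1)!)) · r^i, where C_ℓ = binom(2ℓ,ℓ)/(ℓ+1) is the ℓ-th Catalan number, equivalently G_ℓ(r) = r - 2·binom(2ℓ-1,ℓ-1)·Σ_{i=0}^{ℓ-1} (-1)^i r^{i+ℓ+1} binom(ℓ,i)·(ℓ-i)/((ℓ+i)(ℓ+i+1)). Then G_ℓ(1/2) = (1/2)·(1 - 4^{-ℓ}·binom(2ℓ, ℓ)). -/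
/-!
Write `n = ℓ - 1`; the factorial ratio is `(n+1)(n+2) / ((n+i+1)(n+i+2))`. Expanding `(1-x)ⁿ`
shows that `Σᵢ (-1)ⁱ C(n,i) (x^(n+i+1)/(n+i+1) - 2 x^(n+i+2)/(n+i+2))` is an antiderivative of
`(x(1-x))ⁿ (1-2x)`, hence equals `(x(1-x))ⁿ⁺¹/(n+1)`. At `x = 1/2` the bracket collapses to
`(1/2)^(n+i+1) / ((n+i+1)(n+i+2))`, which evaluates the sum in `G_ℓ(1/2)` as `(n+2) (1/2)ⁿ⁺¹`.
-/

open Finset Nat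

lemma hasDerivAt_pow_succ_div (k : ℕ) (x : ℝ) :
    HasDerivAt (fun t : ℝ => t ^ (k + 1) / (k + 1)) (x ^ k) x := by
  refine ((hasDerivAt_pow (k + 1) x).div_const ((k : ℝ) + 1)).congr_deriv ?_
  rw [Nat.add_sub_cancel]
  push_cast
  field_simp

lemma one_sub_pow_eq_sum {R : Type*} [CommRing R] (x : R) (n : ℕ) :
    (1 - x) ^ n = ∑ i ∈ range (n + 1), (-1) ^ i * (n.choose i : R) * x ^ i := by
  rw [sub_eq_neg_add, add_pow]
  refine sum_congr rfl fun i _ => ?_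
  rw [neg_pow, one_pow, mul_one]
  ring

lemma hasDerivAt_mul_one_sub_pow_succ_div (n : ℕ) (x : ℝ) :
    HasDerivAt (fun t : ℝ => (t * (1 - t)) ^ (n + 1) / ((n : ℝ) + 1))
      ((x * (1 - x)) ^ n * (1 - 2 * x)) x := by
  have hinner : HasDerivAt (fun t : ℝ => t * (1 - t)) (1 - 2 * x) x :=
    ((hasDerivAt_id' x).mul ((hasDerivAt_id' x).const_sub 1)).congr_deriv (by ring)
  exact (hasDerivAt_pow_succ_div n (x * (1 - x))).comp x hinner

noncomputable def alternatingChooseAntideriv (n : ℕ) (x : ℝ) : ℝ :=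
  ∑ i ∈ range (n + 1), (-1) ^ i * (n.choose i : ℝ) *
    (x ^ (n + i + 1) / ((n + i : ℕ) + 1) - 2 * (x ^ (n + i + 1 + 1) / ((n + i + 1 : ℕ) + 1)))

lemma hasDerivAt_alternatingChooseAntideriv (n : ℕ) (x : ℝ) :
    HasDerivAt (alternatingChooseAntideriv n) ((x * (1 - x)) ^ n * (1 - 2 * x)) x := by
  have hterm : ∀ i ∈ range (n + 1), HasDerivAt
      (fun t : ℝ => (-1) ^ i * (n.choose i : ℝ) *
        (t ^ (n + i + 1) / ((n + i : ℕ) + 1) - 2 * (t ^ (n + i + 1 + 1) / ((n + i + 1 : ℕ) + 1))))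
      ((-1) ^ i * (n.choose i : ℝ) * (x ^ (n + i) - 2 * x ^ (n + i + 1))) x := fun i _ =>
    (((hasDerivAt_pow_succ_div (n + i) x).sub
      ((hasDerivAt_pow_succ_div (n + i + 1) x).const_mul 2)).const_mul _)
  refine (HasDerivAt.fun_sum hterm).congr_deriv ?_
  rw [mul_pow, one_sub_pow_eq_sum, mul_sum, sum_mul]
  refine sum_congr rfl fun i _ => ?_
  ring

lemma alternatingChooseAntideriv_eq (n : ℕ) :
    alternatingChooseAntideriv n = fun x => (x * (1 - x)) ^ (n + 1) / ((n : ℝ) + 1) := by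
  have hF := hasDerivAt_alternatingChooseAntideriv n
  have hg := hasDerivAt_mul_one_sub_pow_succ_div n
  refine eq_of_fderiv_eq (fun x => (hF x).differentiableAt) (fun x => (hg x).differentiableAt)
    (fun x => (hF x).hasFDerivAt.fderiv.trans (hg x).hasFDerivAt.fderiv.symm) 0 ?_
  simp [alternatingChooseAntideriv]

lemma sum_alternating_choose_half_pow_div (n : ℕ) :
    ∑ i ∈ range (n + 1), (-1) ^ i * (n.choose i : ℝ) * (1 / 2) ^ i /
      (((n + i : ℕ) + 1) * ((n + i : ℕ) + 2)) = (1 / 2) ^ (n + 1) / (n + 1) := by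
  have h := congrFun (alternatingChooseAntideriv_eq n) (1 / 2)
  have hterm : ∀ i ∈ range (n + 1), (-1) ^ i * (n.choose i : ℝ) *
      ((1 / 2) ^ (n + i + 1) / ((n + i : ℕ) + 1) -
        2 * ((1 / 2) ^ (n + i + 1 + 1) / ((n + i + 1 : ℕ) + 1))) =
      (1 / 2) ^ (n + 1) * ((-1) ^ i * (n.choose i : ℝ) * (1 / 2) ^ i /
        (((n + i : ℕ) + 1) * ((n + i : ℕ) + 2))) := fun i _ => by
    push_cast
    field_simp
    ring
  rw [alternatingChooseAntideriv, sum_congr rfl hterm, ← mul_sum,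
    show (1 / 2 * (1 - 1 / 2) : ℝ) ^ (n + 1) = (1 / 2) ^ (n + 1) * (1 / 2) ^ (n + 1) by
      rw [← mul_pow]; norm_num, mul_div_assoc] at h
  exact mul_left_cancel₀ (by positivity) h

lemma cast_factorial_ratio (n i : ℕ) :
    ((n + 2)! * (n + i)! : ℝ) / (n ! * (n + i + 2)!) =
      ((n : ℝ) + 1) * (n + 2) / (((n + i : ℕ) + 1) * ((n + i : ℕ) + 2)) := by
  rw [Nat.factorial_succ (n + 1), Nat.factorial_succ n, Nat.factorial_succ (n + i + 1),
    Nat.factorial_succ (n + i)]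
  push_cast
  field_simp
  ring

theorem stmt8 (ℓ : ℕ) (hℓ : 1 ≤ ℓ) (G : ℝ → ℝ)
    (hG : ∀ r : ℝ, G r = r - ((Nat.choose (2 * ℓ) ℓ : ℝ) / (ℓ + 1)) * r ^ (ℓ + 1) *
      ∑ i ∈ Finset.range ℓ, (-1 : ℝ) ^ i * (Nat.choose (ℓ - 1) i : ℝ) *
        ((Nat.factorial (ℓ + 1) : ℝ) * (Nat.factorial (ℓ + i - 1) : ℝ) /
          ((Nat.factorial (ℓ - 1) : ℝ) * (Nat.factorial (ℓ + i + 1) : ℝ))) * r ^ i) :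
    G (1 / 2) = (1 / 2) * (1 - (4 : ℝ) ^ (-(ℓ : ℤ)) * (Nat.choose (2 * ℓ) ℓ : ℝ)) := by
  obtain ⟨n, rfl⟩ := Nat.exists_eq_add_of_le' hℓ
  have hsum : ∑ i ∈ range (n + 1), (-1 : ℝ) ^ i * ((n + 1 - 1).choose i : ℝ) *
      (((n + 1 + 1)! : ℝ) * (n + 1 + i - 1)! / ((n + 1 - 1)! * (n + 1 + i + 1)!)) * (1 / 2) ^ i =
      ((n : ℝ) + 2) * (1 / 2) ^ (n + 1) :=
    calc _ = ∑ i ∈ range (n + 1), ((n : ℝ) + 1) * (n + 2) * ((-1) ^ i * (n.choose i : ℝ) *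
          (1 / 2) ^ i / (((n + i : ℕ) + 1) * ((n + i : ℕ) + 2))) := sum_congr rfl fun i _ => by
          rw [show n + 1 + i - 1 = n + i by omega, show n + 1 + i + 1 = n + i + 2 by omega,
            Nat.add_sub_cancel, cast_factorial_ratio]
          ring
      _ = ((n : ℝ) + 1) * (n + 2) * ((1 / 2) ^ (n + 1) / (n + 1)) := by
          rw [← mul_sum, sum_alternating_choose_half_pow_div]
      _ = _ := by field_simp
  have hpow : (4 : ℝ) ^ (-((n + 1 : ℕ) : ℤ)) = (1 / 2) ^ (n + 1) * (1 / 2) ^ (n + 1) := by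
    rw [zpow_neg, zpow_natCast, ← mul_pow, ← inv_pow]
    norm_num
  rw [hG, hsum, hpow]
  push_cast
  field_simp
  ring
end

section
/- For all real x with |x| < 1/4, Σ_{ℓ=1}^∞ binom(2ℓ, ℓ) · x^ℓ / ℓ = 2·log(2) - 2·log(1 + √(1-4x)). -/
/-!
Both sides vanish at `0`, so it suffices to compare derivatives on `(-1/4, 1/4)`. Termwise
differentiation of the left side gives `∑ C(2n+2, n+1) xⁿ = ((1 - 4x)^(-1/2) - 1) / x`, by the
binomial series for `(1 - y)^(-1/2)`, whose coefficients are `C(2n, n) / 4ⁿ`. With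
`w = √(1 - 4x)` and `1 - w² = 4x` this is `4 / (w (1 + w))`, the derivative of
`-2 log (1 + w)`.
-/

open Real
open scoped Nat

theorem ascPochhammer_eval_half_mul_four_pow (n : ℕ) :
    (ascPochhammer ℝ n).eval (1 / 2) * 4 ^ n = n ! * Nat.centralBinom n := by
  induction n with
  | zero => simp
  | succ n ih =>
    have h : ((n + 1 : ℕ) * Nat.centralBinom (n + 1) : ℝ) =
        2 * (2 * n + 1) * Nat.centralBinom n := by
      exact_mod_cast Nat.succ_mul_centralBinom_succ n
    rw [ascPochhammer_succ_eval, Nat.factorial_succ, pow_succ]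
    push_cast at h ⊢
    linear_combination (2 * (2 * (n : ℝ) + 1)) * ih - (n ! : ℝ) * h

theorem Ring.choose_half_add_sub_one_mul_four_pow (n : ℕ) :
    Ring.choose ((1 / 2 : ℝ) + n - 1) n * 4 ^ n = Nat.centralBinom n := by
  have h := Ring.factorial_nsmul_multichoose_eq_ascPochhammer (1 / 2 : ℝ) n
  rw [Polynomial.ascPochhammer_smeval_eq_eval, nsmul_eq_mul, Ring.multichoose_eq] at h
  apply mul_left_cancel₀ (by positivity : (n ! : ℝ) ≠ 0)
  rw [← mul_assoc, h, ascPochhammer_eval_half_mul_four_pow]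

theorem hasSum_centralBinom_mul_pow {x : ℝ} (hx : |x| < 1 / 4) :
    HasSum (fun n => (Nat.centralBinom n : ℝ) * x ^ n) (1 / √(1 - 4 * x)) := by
  have h4x : 4 * x ∈ Metric.eball (0 : ℝ) 1 := by
    rw [← ENNReal.coe_one, Metric.eball_coe, mem_ball_zero_iff, norm_mul, Real.norm_eq_abs]
    norm_num
    linarith
  have hbinom := (one_div_one_sub_rpow_hasFPowerSeriesOnBall_zero (1 / 2)).hasSum h4x
  simp only [FormalMultilinearSeries.ofScalars_apply_eq, zero_add, smul_eq_mul] at hbinom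
  have hcoeff (n : ℕ) :
      Ring.choose ((1 / 2 : ℝ) + n - 1) n * (4 * x) ^ n = Nat.centralBinom n * x ^ n := by
    rw [mul_pow, ← mul_assoc, Ring.choose_half_add_sub_one_mul_four_pow]
  simpa only [hcoeff, ← sqrt_eq_rpow] using hbinom

theorem hasSum_centralBinom_succ_mul_pow {x : ℝ} (hx : |x| < 1 / 4) :
    HasSum (fun n => (Nat.centralBinom (n + 1) : ℝ) * x ^ n)
      (4 / (√(1 - 4 * x) * (1 + √(1 - 4 * x)))) := by
  rcases eq_or_ne x 0 with rfl | hx0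
  · convert hasSum_ite_eq 0 (Nat.centralBinom 1 : ℝ) using 1
    · ext n; cases n <;> simp
    · norm_num [Nat.centralBinom]
  have hw : 0 < √(1 - 4 * x) := sqrt_pos.2 (by linarith [le_abs_self x])
  have hsq : √(1 - 4 * x) ^ 2 = 1 - 4 * x := sq_sqrt (by linarith [le_abs_self x])
  have hshift := (hasSum_nat_add_iff' 1).2 (hasSum_centralBinom_mul_pow hx)
  rw [Finset.sum_range_one, Nat.centralBinom_zero, Nat.cast_one, one_mul, pow_zero] at hshift
  have hclosed : 1 / √(1 - 4 * x) - 1 = x * (4 / (√(1 - 4 * x) * (1 + √(1 - 4 * x)))) := by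
    field_simp
    linear_combination -hsq
  rw [hclosed] at hshift
  exact (hasSum_mul_left_iff hx0).1 (hshift.congr_fun fun n => by ring)

theorem hasDerivAt_log_one_add_sqrt_one_sub_four_mul {x : ℝ} (hx : x < 1 / 4) :
    HasDerivAt (fun z => log (1 + √(1 - 4 * z)))
      (-2 / (√(1 - 4 * x) * (1 + √(1 - 4 * x)))) x := by
  have hpos : 0 < 1 - 4 * x := by linarith
  have hsqrt := ((hasDerivAt_id' x).const_mul 4).const_sub 1 |>.sqrt hpos.ne'
  convert (hsqrt.const_add 1).log (by positivity) using 1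
  field_simp
  ring

section TermwiseIntegration

variable {𝕜 : Type*} [RCLike 𝕜] {b : ℕ → 𝕜} {r : ℝ} {x : 𝕜}

theorem hasDerivAt_mul_pow_succ_div (c : 𝕜) (n : ℕ) (z : 𝕜) :
    HasDerivAt (fun y => c * y ^ (n + 1) / (n + 1)) (c * z ^ n) z := by
  have hn : (n + 1 : 𝕜) ≠ 0 := by exact_mod_cast n.succ_ne_zero
  refine (((hasDerivAt_pow (n + 1) z).const_mul c).div_const (n + 1 : 𝕜)).congr_deriv ?_
  rw [Nat.add_sub_cancel]
  push_cast
  field_simp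

theorem norm_mul_pow_le_of_mem_ball (c : 𝕜) (n : ℕ) {z : 𝕜} (hz : z ∈ Metric.ball 0 r) :
    ‖c * z ^ n‖ ≤ ‖c‖ * r ^ n := by
  rw [norm_mul, norm_pow]
  gcongr
  exact (mem_ball_zero_iff.1 hz).le

theorem summable_mul_pow_succ_div (hb : Summable fun n => ‖b n‖ * r ^ n) (hx : ‖x‖ < r) :
    Summable fun n => b n * x ^ (n + 1) / (n + 1) :=
  summable_of_summable_hasDerivAt_of_isPreconnected
    (g := fun n z => b n * z ^ (n + 1) / (n + 1)) (g' := fun n z => b n * z ^ n)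
    hb Metric.isOpen_ball (convex_ball 0 r).isPreconnected
    (fun n z _ => hasDerivAt_mul_pow_succ_div (b n) n z)
    (fun n _ hz => norm_mul_pow_le_of_mem_ball (b n) n hz)
    (Metric.mem_ball_self ((norm_nonneg x).trans_lt hx)) (by simp) (mem_ball_zero_iff.2 hx)

theorem hasDerivAt_tsum_mul_pow_succ_div (hb : Summable fun n => ‖b n‖ * r ^ n)
    (hx : ‖x‖ < r) :
    HasDerivAt (fun z => ∑' n, b n * z ^ (n + 1) / (n + 1)) (∑' n, b n * x ^ n) x :=
  hasDerivAt_tsum_of_isPreconnected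
    (g := fun n z => b n * z ^ (n + 1) / (n + 1)) (g' := fun n z => b n * z ^ n)
    hb Metric.isOpen_ball (convex_ball 0 r).isPreconnected
    (fun n z _ => hasDerivAt_mul_pow_succ_div (b n) n z)
    (fun n _ hz => norm_mul_pow_le_of_mem_ball (b n) n hz)
    (Metric.mem_ball_self ((norm_nonneg x).trans_lt hx)) (by simp) (mem_ball_zero_iff.2 hx)

end TermwiseIntegration

theorem exists_summable_norm_centralBinom_succ_mul_pow {x : ℝ} (hx : |x| < 1 / 4) :
    ∃ r, ‖x‖ < r ∧ Summable fun n => ‖(Nat.centralBinom (n + 1) : ℝ)‖ * r ^ n := by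
  obtain ⟨r, hxr, hr⟩ := exists_between hx
  have hr₀ : 0 ≤ r := (abs_nonneg x).trans hxr.le
  refine ⟨r, hxr, ?_⟩
  simpa only [Real.norm_natCast] using
    (hasSum_centralBinom_succ_mul_pow (by rwa [abs_of_nonneg hr₀])).summable

theorem hasDerivAt_tsum_centralBinom_succ_mul_pow_succ_div {x : ℝ} (hx : |x| < 1 / 4) :
    HasDerivAt (fun z => ∑' n, (Nat.centralBinom (n + 1) : ℝ) * z ^ (n + 1) / (n + 1))
      (4 / (√(1 - 4 * x) * (1 + √(1 - 4 * x)))) x := by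
  obtain ⟨r, hxr, hr⟩ := exists_summable_norm_centralBinom_succ_mul_pow hx
  rw [← (hasSum_centralBinom_succ_mul_pow hx).tsum_eq]
  exact hasDerivAt_tsum_mul_pow_succ_div hr hxr

theorem summable_centralBinom_succ_mul_pow_succ_div {x : ℝ} (hx : |x| < 1 / 4) :
    Summable fun n => (Nat.centralBinom (n + 1) : ℝ) * x ^ (n + 1) / (n + 1) := by
  obtain ⟨r, hxr, hr⟩ := exists_summable_norm_centralBinom_succ_mul_pow hx
  exact summable_mul_pow_succ_div hr hxr

theorem stmt9 (x : ℝ) (hx : |x| < 1 / 4) :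
    HasSum (fun ℓ : ℕ => (Nat.choose (2 * (ℓ + 1)) (ℓ + 1) : ℝ) * x ^ (ℓ + 1) / (ℓ + 1))
      (2 * Real.log 2 - 2 * Real.log (1 + Real.sqrt (1 - 4 * x))) := by
  simp only [← Nat.centralBinom_eq_two_mul_choose]
  set S := fun z : ℝ => ∑' n, (Nat.centralBinom (n + 1) : ℝ) * z ^ (n + 1) / (n + 1)
  set F := fun z : ℝ => 2 * log 2 - 2 * log (1 + √(1 - 4 * z))
  set I := Set.Ioo (-(1 / 4) : ℝ) (1 / 4)
  have hS : ∀ y ∈ I, HasDerivAt S (4 / (√(1 - 4 * y) * (1 + √(1 - 4 * y)))) y :=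
    fun y hy => hasDerivAt_tsum_centralBinom_succ_mul_pow_succ_div (abs_lt.2 hy)
  have hF : ∀ y ∈ I, HasDerivAt F (4 / (√(1 - 4 * y) * (1 + √(1 - 4 * y)))) y := fun y hy =>
    (((hasDerivAt_log_one_add_sqrt_one_sub_four_mul hy.2).const_mul 2).const_sub
      (2 * log 2)).congr_deriv (by ring)
  have hSF : Set.EqOn S F I :=
    isOpen_Ioo.eqOn_of_deriv_eq (convex_Ioo _ _).isPreconnected
      (fun y hy => (hS y hy).differentiableAt.differentiableWithinAt)
      (fun y hy => (hF y hy).differentiableAt.differentiableWithinAt)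
      (fun y hy => (hS y hy).deriv.trans (hF y hy).deriv.symm) (x := 0) (by norm_num [I])
      (by norm_num [S, F])
  show HasSum _ (F x)
  rw [← hSF (abs_lt.1 hx)]
  exact (summable_centralBinom_succ_mul_pow_succ_div hx).hasSum
end

section
/- Define h₁(x) = ((x+1)/2)·log((x+1)/2) - ((x-1)/2)·log((x-1)/2) for x > 1 and h₂(x) = log(x). Then the function x ↦ h₁(x) - h₂(x) is monotonically increasing on (1, ∞), and for all x > 1, h₁(x) - h₂(x) < 1 - log(2), with lim_{x→∞} (h₁(x) - h₂(x)) = 1 - log(2). -/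
/-!
The derivative of `g = h₁ - h₂` is `½ log ((x + 1) / (x - 1)) - 1 / x`, which is positive since
`log ((x + 1) / (x - 1)) = 2 artanh (1 / x) > 2 / x`. Rewriting
`g x = ((x + 1) / 2) log (1 + 1 / x) - ((x - 1) / 2) log (1 - 1 / x) - log 2`
and using `x log (1 + t / x) → t` gives `g → ½ + ½ - log 2`; a strictly increasing function
stays strictly below its limit.
-/

open Real Filter Topology Set

-- `2 / (2a + 1)` is the first term of the series of `log (1 + a⁻¹) = 2 artanh (1 / (2a + 1))`.
lemma two_div_lt_log_one_add_inv {a : ℝ} (ha : 0 < a) : 2 / (2 * a + 1) < log (1 + a⁻¹) := by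
  have hsum := hasSum_log_one_add_inv ha
  have hfirst_two := sum_le_hasSum (Finset.range 2) (fun k _ ↦ by positivity) hsum
  simp only [Finset.sum_range_succ, Finset.sum_range_zero] at hfirst_two
  norm_num at hfirst_two
  have : 0 < ((2 * a + 1) ^ 3)⁻¹ := by positivity
  rw [div_eq_mul_inv]
  linarith

lemma tendsto_add_mul_log_one_add_div_atTop (a c : ℝ) :
    Tendsto (fun x ↦ (x + c) * log (1 + a / x)) atTop (𝓝 a) := by
  have hlog : Tendsto (fun x ↦ log (1 + a / x)) atTop (𝓝 0) := by
    have h1 : Tendsto (fun x : ℝ ↦ 1 + a / x) atTop (𝓝 1) := by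
      simpa using (tendsto_const_nhds (x := (1 : ℝ))).add
        ((tendsto_const_nhds (x := a)).div_atTop tendsto_id)
    simpa [Function.comp_def] using ((continuousAt_log one_ne_zero).tendsto).comp h1
  simpa [add_mul] using (tendsto_mul_log_one_add_div_atTop a).add (hlog.const_mul c)

lemma StrictMonoOn.lt_of_tendsto_atTop {α β : Type*} [LinearOrder α] [NoMaxOrder α]
    [TopologicalSpace β] [Preorder β] [ClosedIciTopology β] {f : α → β} {a x : α} {l : β}
    (hf : StrictMonoOn f (Ioi a)) (hl : Tendsto f atTop (𝓝 l)) (hx : a < x) : f x < l := by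
  have : Nonempty α := ⟨x⟩
  obtain ⟨y, hxy⟩ := exists_gt x
  refine (hf hx (hx.trans hxy) hxy).trans_le (ge_of_tendsto hl ?_)
  filter_upwards [eventually_ge_atTop y] with z hz
  exact hf.monotoneOn (hx.trans hxy) (mem_Ioi.2 ((hx.trans hxy).trans_le hz)) hz

noncomputable def entropyGap (x : ℝ) : ℝ :=
  (x + 1) / 2 * log ((x + 1) / 2) - (x - 1) / 2 * log ((x - 1) / 2) - log x

lemma hasDerivAt_entropyGap {x : ℝ} (hx : 1 < x) :
    HasDerivAt entropyGap ((log ((x + 1) / 2) - log ((x - 1) / 2)) / 2 - x⁻¹) x := by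
  have hshift (c : ℝ) (hc : 0 < x + c) :
      HasDerivAt (fun y ↦ (y + c) / 2 * log ((y + c) / 2)) ((log ((x + c) / 2) + 1) / 2) x := by
    have := (hasDerivAt_mul_log (x := (x + c) / 2) (by positivity)).comp x
      (((hasDerivAt_id x).add_const c).div_const 2)
    simpa [Function.comp_def, div_eq_mul_inv] using this
  have h := ((hshift 1 (by linarith)).sub (hshift (-1) (by linarith))).sub
    (hasDerivAt_log (by positivity))
  simp only [← sub_eq_add_neg] at h
  exact h.congr_deriv (by ring)

lemma entropyGap_strictMonoOn : StrictMonoOn entropyGap (Ioi 1) := by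
  refine strictMonoOn_of_deriv_pos (convex_Ioi 1)
    (fun x hx ↦ (hasDerivAt_entropyGap hx).continuousAt.continuousWithinAt) fun x hx ↦ ?_
  rw [interior_Ioi, mem_Ioi] at hx
  have hx1 : x - 1 ≠ 0 := by linarith
  have key : 2 / x < log ((x + 1) / 2) - log ((x - 1) / 2) := by
    rw [← log_div (by linarith) (by linarith)]
    -- with `a = (x - 1) / 2`: `2a + 1 = x` and `1 + a⁻¹ = (x + 1) / (x - 1)`
    convert two_div_lt_log_one_add_inv (a := (x - 1) / 2) (by linarith) using 2
    · ring
    · field_simp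
      ring
  rw [(hasDerivAt_entropyGap hx).deriv]
  rw [div_eq_mul_inv] at key
  linarith

lemma entropyGap_eq_mul_log_one_add_div {x : ℝ} (hx : 1 < x) :
    entropyGap x = (x + 1) / 2 * log (1 + 1 / x) - (x + -1) / 2 * log (1 + -1 / x) - log 2 := by
  have hx0 : x ≠ 0 := by positivity
  rw [entropyGap, log_div (by linarith) two_ne_zero, log_div (by linarith) two_ne_zero,
    show 1 + 1 / x = (x + 1) / x by field_simp, show 1 + -1 / x = (x - 1) / x by field_simp; ring,
    log_div (by linarith) hx0, log_div (by linarith) hx0]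
  ring

lemma tendsto_entropyGap_atTop : Tendsto entropyGap atTop (𝓝 (1 - log 2)) := by
  have := (((tendsto_add_mul_log_one_add_div_atTop 1 1).div_const 2).sub
    ((tendsto_add_mul_log_one_add_div_atTop (-1) (-1)).div_const 2)).sub_const (log 2)
  rw [show (1 : ℝ) / 2 - -1 / 2 = 1 by norm_num] at this
  refine this.congr' ?_
  filter_upwards [eventually_gt_atTop 1] with x hx
  rw [entropyGap_eq_mul_log_one_add_div hx]
  ring

theorem stmt12 (h₁ h₂ : ℝ → ℝ)
    (hh₁ : ∀ x : ℝ, 1 < x → h₁ x =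
      ((x + 1) / 2) * Real.log ((x + 1) / 2) - ((x - 1) / 2) * Real.log ((x - 1) / 2))
    (hh₂ : ∀ x : ℝ, 1 < x → h₂ x = Real.log x) :
    StrictMonoOn (fun x => h₁ x - h₂ x) (Set.Ioi 1) ∧
    (∀ x : ℝ, 1 < x → h₁ x - h₂ x < 1 - Real.log 2) ∧
    Filter.Tendsto (fun x => h₁ x - h₂ x) Filter.atTop (nhds (1 - Real.log 2)) := by
  have heq : EqOn entropyGap (fun x => h₁ x - h₂ x) (Ioi 1) := fun x hx => by
    simp only [entropyGap, hh₁ x hx, hh₂ x hx]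
  refine ⟨entropyGap_strictMonoOn.congr heq, fun x hx => ?_,
    tendsto_entropyGap_atTop.congr' (heq.eventuallyEq_of_mem (Ioi_mem_atTop 1))⟩
  exact (heq hx).symm.trans_lt
    (entropyGap_strictMonoOn.lt_of_tendsto_atTop tendsto_entropyGap_atTop hx)
end
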